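/- arXiv:2604.02806 — 4 statements merged into one kernel-verified Lean document; each statement's English description precedes it below -/
import Mathlib

section
/- Let f_1, ..., f_m : ℝ^n → ℝ, X ⊆ ℝ^n, and strictly positive weights w_1, ..., w_m summing to 1. If x* ∈ X minimizes ∑ᵢ wᵢ fᵢ(x) over X, then x* is properly Pareto-efficient: there exists a constant R > 0 such that for every i and every x ∈ X with fᵢ(x) < fᵢ(x*), there is an index j with fⱼ(x) > fⱼ(x*) and (fᵢ(x*) − fᵢ(x)) / (fⱼ(x) − fⱼ(x*)) ≤ R. -/
/-!
Write `dₖ = fₖ(x) - fₖ(x*)`, so that minimality of `x*` gives `∑ₖ wₖ dₖ ≥ 0`. If `dᵢ < 0`, take `j`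
with `dⱼ` largest. Every term of `∑ₖ wₖ (dⱼ - dₖ) = (∑ₖ wₖ) dⱼ - ∑ₖ wₖ dₖ` is nonnegative, so
`wᵢ (dⱼ - dᵢ) ≤ (∑ₖ wₖ) dⱼ`. This forces `dⱼ > 0` and `-dᵢ / dⱼ ≤ (∑ₖ wₖ) / wᵢ`, which is at most
`(∑ₖ wₖ) / minₖ wₖ`.
-/

open Finset

variable {ι : Type*} [Fintype ι]

theorem mul_sub_le_sum_mul_of_forall_le {w d : ι → ℝ} (hw : ∀ k, 0 ≤ w k)
    (hd : 0 ≤ ∑ k, w k * d k) {j : ι} (hj : ∀ k, d k ≤ d j) (i : ι) :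
    w i * (d j - d i) ≤ (∑ k, w k) * d j :=
  calc w i * (d j - d i) ≤ ∑ k, w k * (d j - d k) :=
        single_le_sum (fun k _ => mul_nonneg (hw k) (sub_nonneg.mpr (hj k))) (mem_univ i)
    _ = (∑ k, w k) * d j - ∑ k, w k * d k := by
        simp only [mul_sub, sum_sub_distrib, sum_mul]
    _ ≤ (∑ k, w k) * d j := sub_le_self _ hd

theorem exists_pos_and_neg_div_le_sum_div {w d : ι → ℝ} (hw : ∀ k, 0 < w k)
    (hd : 0 ≤ ∑ k, w k * d k) {i : ι} (hi : d i < 0) :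
    ∃ j, 0 < d j ∧ -d i / d j ≤ (∑ k, w k) / w i := by
  have : Nonempty ι := ⟨i⟩
  obtain ⟨j, hj⟩ := Finite.exists_max d
  have key := mul_sub_le_sum_mul_of_forall_le (fun k => (hw k).le) hd hj i
  have hwi_le : w i ≤ ∑ k, w k := single_le_sum (fun k _ => (hw k).le) (mem_univ i)
  have hdj : 0 < d j := by
    by_contra! hdj
    nlinarith [hw i, mul_le_mul_of_nonpos_right hwi_le hdj]
  refine ⟨j, hdj, ?_⟩
  rw [div_le_div_iff₀ hdj (hw i)]
  nlinarith [mul_pos (hw i) hdj]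

theorem weighted_sum_minimizer_is_properly_pareto_efficient_general
    {n m : ℕ} (f : Fin m → (Fin n → ℝ) → ℝ) (X : Set (Fin n → ℝ))
    (w : Fin m → ℝ) (hw : ∀ i, 0 < w i)
    (xstar : Fin n → ℝ)
    (hmin : ∀ x ∈ X, ∑ i, w i * f i xstar ≤ ∑ i, w i * f i x) :
    ∃ R > (0 : ℝ), ∀ i, ∀ x ∈ X, f i x < f i xstar →
      ∃ j, f j xstar < f j x ∧
        (f i xstar - f i x) / (f j x - f j xstar) ≤ R := by
  cases isEmpty_or_nonempty (Fin m)
  · exact ⟨1, one_pos, fun i => isEmptyElim i⟩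
  obtain ⟨i₀, hi₀⟩ := Finite.exists_min w
  have hS : 0 < ∑ k, w k := sum_pos (fun k _ => hw k) univ_nonempty
  refine ⟨(∑ k, w k) / w i₀, div_pos hS (hw i₀), fun i x hxX hfi => ?_⟩
  have hd : 0 ≤ ∑ k, w k * (f k x - f k xstar) := by
    simp only [mul_sub, sum_sub_distrib]
    exact sub_nonneg.mpr (hmin x hxX)
  obtain ⟨j, hj, hbound⟩ := exists_pos_and_neg_div_le_sum_div hw hd (sub_neg.mpr hfi)
  refine ⟨j, sub_pos.mp hj, ?_⟩
  rw [← neg_sub]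
  exact hbound.trans (div_le_div_of_nonneg_left hS.le (hw i₀) (hi₀ i))

theorem weighted_sum_minimizer_is_properly_pareto_efficient
    {n m : ℕ} (f : Fin m → (Fin n → ℝ) → ℝ) (X : Set (Fin n → ℝ))
    (w : Fin m → ℝ) (hw : ∀ i, 0 < w i) (hsum : ∑ i, w i = 1)
    (xstar : Fin n → ℝ) (hx : xstar ∈ X)
    (hmin : ∀ x ∈ X, ∑ i, w i * f i xstar ≤ ∑ i, w i * f i x) :
    ∃ R > (0 : ℝ), ∀ i, ∀ x ∈ X, f i x < f i xstar →
      ∃ j, f j xstar < f j x ∧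
        (f i xstar - f i x) / (f j x - f j xstar) ≤ R :=
  weighted_sum_minimizer_is_properly_pareto_efficient_general f X w hw xstar hmin
end

section
/- For real numbers s_1, s_2, s_3 satisfying s_1 − 2s_2 + s_3 − 2 = 0 and s_2² − 2s_2s_3 + s_3² − 2s_2 − 2s_3 + 1 = 0, setting x := (s_1 − s_2 + 1)/2, we have s_1 = x², s_2 = (x−1)², s_3 = (x−2)². -/
theorem one_variable_triobjective_eliminant_converse
    (s₁ s₂ s₃ : ℝ)
    (h₁ : s₁ - 2*s₂ + s₃ = 2)
    (h₂ : s₂^2 - 2*s₂*s₃ + s₃^2 - 2*s₂ - 2*s₃ + 1 = 0) :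
    s₁ = ((s₁ - s₂ + 1)/2)^2 ∧ s₂ = ((s₁ - s₂ + 1)/2 - 1)^2 ∧
      s₃ = ((s₁ - s₂ + 1)/2 - 2)^2 := by
  have hs : s₁ = 2 + 2*s₂ - s₃ := by linarith
  subst hs
  refine ⟨by nlinarith [h₂], by nlinarith [h₂], by nlinarith [h₂]⟩
end

section
/- For the bi-objective problem minimizing f_1(x) = −x_1³ − x_2³ and f_2(x) = x_1² − x_2² subject to g(x) = x_1² + (x_2+1)² − 1 = 0, every feasible x ∈ ℝ² with (s_1, s_2) = (f_1(x), f_2(x)) satisfies the degree-six eliminant relation s_2⁶ − 12s_2⁵ − 12s_1s_2⁴ + 16s_1⁴ + 48s_1³s_2 + 48s_1²s_2² + 32s_1s_2³ + 48s_2⁴ − 32s_1³ − 48s_1²s_2 = 0. -/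
/-!
On the circle `x₁² = -x₂(x₂ + 2)`, so `s₂ = -2x₂(x₂ + 1)`: the coordinate `x₂` is a root of
`X² + X + s₂/2`. Squaring `s₁ + x₂³ = -x₁³` gives `(s₁ + x₂³)² = (x₁²)³ = (s₂/2 - x₂)³`, a relation
in `x₂` alone, which reduces modulo that quadratic to a linear relation `A + B·(2x₂) = 0` over
`ℚ[s₁, s₂]`. The eliminant is the norm of `A + B·(2x₂)` from `ℚ[s₁, s₂][x₂]` down to `ℚ[s₁, s₂]`.
-/

theorem sq_sub_mul_add_mul_sq_eq_zero_of_root {R : Type*} [CommRing R] {t p q A B : R}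
    (ht : t ^ 2 + p * t + q = 0) (h : A + B * t = 0) :
    A ^ 2 - p * A * B + q * B ^ 2 = 0 := by
  linear_combination B ^ 2 * ht + (A - B * t - p * B) * h

theorem biobjective_circle_eliminant_relation
    (x₁ x₂ s₁ s₂ : ℝ)
    (hg : x₁^2 + (x₂ + 1)^2 - 1 = 0)
    (h₁ : s₁ = -x₁^3 - x₂^3) (h₂ : s₂ = x₁^2 - x₂^2) :
    s₂^6 - 12*s₂^5 - 12*s₁*s₂^4 + 16*s₁^4 + 48*s₁^3*s₂ + 48*s₁^2*s₂^2 +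
      32*s₁*s₂^3 + 48*s₂^4 - 32*s₁^3 - 48*s₁^2*s₂ = 0 := by
  have hx₁ : x₁ ^ 2 = s₂ / 2 - x₂ := by linear_combination hg / 2 - h₂ / 2
  have hquad : x₂ ^ 2 + x₂ + s₂ / 2 = 0 := by linear_combination hg / 2 + h₂ / 2
  have hcube : (s₁ + x₂ ^ 3) ^ 2 = (s₂ / 2 - x₂) ^ 3 := by
    rw [h₁, ← hx₁]
    ring
  -- the quotient of `4 · hcube` by `hquad` is the coefficient of `hquad`
  have hlin : ((2 * s₁ + s₂) ^ 2 + 5 * s₂ ^ 2 - s₂ ^ 3)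
      + 2 * (2 * s₁ - s₁ * s₂ + 3 * s₂) * (2 * x₂) = 0 := by
    linear_combination 4 * hcube + (-4 * x₂ ^ 4 + 4 * x₂ ^ 3 - 4 * x₂ ^ 2 + 2 * s₂ * x₂ ^ 2
      - 4 * s₂ * x₂ + 12 * s₂ - s₂ ^ 2 + 8 * s₁ - 8 * s₁ * x₂) * hquad
  have hroot : (2 * x₂) ^ 2 + 2 * (2 * x₂) + 2 * s₂ = 0 := by linear_combination 4 * hquad
  linear_combination sq_sub_mul_add_mul_sq_eq_zero_of_root hroot hlin
end

section
/- For a fixed unit vector a ∈ ℝⁿ with r = aᵀy ≠ 0, the Pareto front of the bi-objective problem min over ŷ ∈ ℝⁿ of (‖y − ŷ‖², (aᵀŷ)²) is exactly the curve { (s_1, s_2) : √s_1 + √s_2 = |r|, s_1 ≥ 0, s_2 ≥ 0 }. -/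
/-!
Pareto-efficient values are the `Minimal` elements, for the product order, of the set of attained
values. Work first with the unsquared objectives `(‖y - ŷ‖, |⟪a, ŷ⟫|)`: by Cauchy–Schwarz they
satisfy `|⟪a, y⟫| ≤ ‖y - ŷ‖ + |⟪a, ŷ⟫|`, and equality holds along `ŷ = y - t • sign ⟪a, y⟫ • a`,
`0 ≤ t ≤ |⟪a, y⟫|`. So the attained set lies above the line `f + g = |⟪a, y⟫|` and contains its
part in the first quadrant, which is therefore the set of minimal elements. Squaring both
coordinates is an order isomorphism of the first quadrant, so it carries minimal elements to
minimal elements.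
-/

open scoped RealInnerProductSpace

theorem Prod.lt_iff_le_and_lt_or_lt {α β : Type*} [Preorder α] [Preorder β] {p q : α × β} :
    p < q ↔ p ≤ q ∧ (p.1 < q.1 ∨ p.2 < q.2) := by
  rw [Prod.lt_iff, Prod.le_def]
  constructor
  · rintro (⟨h₁, h₂⟩ | ⟨h₁, h₂⟩)
    · exact ⟨⟨h₁.le, h₂⟩, .inl h₁⟩
    · exact ⟨⟨h₁, h₂.le⟩, .inr h₂⟩
  · rintro ⟨⟨h₁, h₂⟩, h | h⟩
    · exact .inl ⟨h, h₂⟩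
    · exact .inr ⟨h₁, h⟩

theorem setOf_minimal_mem_range_prod {ι α β : Type*} [Preorder α] [Preorder β]
    (f : ι → α × β) :
    {x | Minimal (· ∈ Set.range f) x} =
      {x | ∃ i, (¬ ∃ j, ((f j).1 ≤ (f i).1 ∧ (f j).2 ≤ (f i).2) ∧
        ((f j).1 < (f i).1 ∨ (f j).2 < (f i).2)) ∧ x = f i} := by
  ext x
  simp only [Set.mem_ofPred_eq, minimal_iff_forall_lt, ← Prod.le_def,
    ← Prod.lt_iff_le_and_lt_or_lt]
  constructor
  · rintro ⟨⟨i, rfl⟩, hmin⟩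
    exact ⟨i, fun ⟨j, hj⟩ ↦ hmin hj ⟨j, rfl⟩, rfl⟩
  · rintro ⟨i, hmin, rfl⟩
    exact ⟨⟨i, rfl⟩, fun _ hlt ⟨j, hj⟩ ↦ hmin ⟨j, hj ▸ hlt⟩⟩

def sumSegment (c : ℝ) : Set (ℝ × ℝ) := {p | p.1 + p.2 = c ∧ 0 ≤ p.1 ∧ 0 ≤ p.2}

theorem Prod.fst_add_snd_lt_of_lt {p q : ℝ × ℝ} (h : p < q) : p.1 + p.2 < q.1 + q.2 := by
  rcases Prod.lt_iff.1 h with ⟨h₁, h₂⟩ | ⟨h₁, h₂⟩ <;> linarith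

theorem setOf_minimal_eq_sumSegment {S : Set (ℝ × ℝ)} {c : ℝ} (hc : 0 ≤ c)
    (hseg : sumSegment c ⊆ S) (hS : ∀ p ∈ S, 0 ≤ p.1 ∧ 0 ≤ p.2 ∧ c ≤ p.1 + p.2) :
    {p | Minimal (· ∈ S) p} = sumSegment c := by
  ext p
  constructor
  · intro hp
    obtain ⟨hp₁, hp₂, hpc⟩ := hS p hp.prop
    by_contra hne
    have hlt : c < p.1 + p.2 := hpc.lt_of_ne fun h ↦ hne ⟨h.symm, hp₁, hp₂⟩
    -- a point of the segment below or to the left of `p`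
    set q : ℝ × ℝ := (min p.1 c, c - min p.1 c)
    have hq : q ∈ sumSegment c := ⟨by simp [q], le_min hp₁ hc, sub_nonneg.2 (min_le_right _ _)⟩
    have hqp : q ≤ p := ⟨min_le_left _ _, by
      rw [sub_le_iff_le_add, ← sub_le_iff_le_add']; exact le_min (by linarith) (by linarith)⟩
    have hqp' : q ≠ p := fun h ↦ by rw [← h, hq.1] at hlt; exact hlt.false
    exact hp.not_prop_of_lt (hqp.lt_of_ne hqp') (hseg hq)
  · intro hp
    refine minimal_iff_forall_lt.2 ⟨hseg hp, fun q hqp hq ↦ ?_⟩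
    have := Prod.fst_add_snd_lt_of_lt hqp
    linarith [(hS q hq).2.2, hp.1]

theorem image_sq_sumSegment (c : ℝ) :
    Prod.map (· ^ 2) (· ^ 2) '' sumSegment c =
      {s : ℝ × ℝ | Real.sqrt s.1 + Real.sqrt s.2 = c ∧ 0 ≤ s.1 ∧ 0 ≤ s.2} := by
  ext s
  constructor
  · rintro ⟨p, ⟨hsum, hp₁, hp₂⟩, rfl⟩
    exact ⟨by simpa [Real.sqrt_sq hp₁, Real.sqrt_sq hp₂] using hsum, sq_nonneg _, sq_nonneg _⟩
  · rintro ⟨hsum, hs₁, hs₂⟩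
    exact ⟨(√s.1, √s.2), ⟨hsum, Real.sqrt_nonneg _, Real.sqrt_nonneg _⟩,
      Prod.ext (Real.sq_sqrt hs₁) (Real.sq_sqrt hs₂)⟩

theorem Prod.map_sq_le_map_sq_iff {p q : ℝ × ℝ} (hp : 0 ≤ p) (hq : 0 ≤ q) :
    Prod.map (· ^ 2) (· ^ 2) p ≤ Prod.map (· ^ 2) (· ^ 2) q ↔ p ≤ q := by
  simp only [Prod.le_def, Prod.map_fst, Prod.map_snd,
    pow_le_pow_iff_left₀ hp.1 hq.1 two_ne_zero, pow_le_pow_iff_left₀ hp.2 hq.2 two_ne_zero]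

theorem abs_mul_sign_eq_and_abs_sub_mul_sign_eq {r t : ℝ} (ht₀ : 0 ≤ t) (ht : t ≤ |r|) :
    |t * SignType.sign r| = t ∧ |r - t * SignType.sign r| = |r| - t := by
  rcases lt_trichotomy r 0 with h | rfl | h
  · rw [abs_of_neg h] at ht ⊢
    simp [sign_neg h, abs_of_nonneg ht₀, abs_of_nonpos (by linarith : r + t ≤ 0), neg_add_eq_sub]
  · obtain rfl : t = 0 := le_antisymm (by simpa using ht) ht₀
    simp
  · rw [abs_of_pos h] at ht ⊢
    simp [sign_pos h, abs_of_nonneg ht₀, abs_of_nonneg (by linarith : 0 ≤ r - t)]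

section InnerProductSpace

variable {E : Type*} [NormedAddCommGroup E] [InnerProductSpace ℝ E]

theorem abs_inner_le_mul_norm_sub_add_abs_inner (a y z : E) :
    |⟪a, y⟫| ≤ ‖a‖ * ‖y - z‖ + |⟪a, z⟫| :=
  calc |⟪a, y⟫| = |⟪a, y - z⟫ + ⟪a, z⟫| := by rw [inner_sub_right, sub_add_cancel]
    _ ≤ |⟪a, y - z⟫| + |⟪a, z⟫| := abs_add_le _ _
    _ ≤ ‖a‖ * ‖y - z‖ + |⟪a, z⟫| := by gcongr; exact abs_real_inner_le_norm a (y - z)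

theorem nonneg_and_abs_inner_le_add_of_mem_range {a : E} (ha : ‖a‖ = 1) (y : E) :
    ∀ p ∈ Set.range fun z ↦ (‖y - z‖, |⟪a, z⟫|), 0 ≤ p.1 ∧ 0 ≤ p.2 ∧ |⟪a, y⟫| ≤ p.1 + p.2 := by
  rintro _ ⟨z, rfl⟩
  exact ⟨norm_nonneg _, abs_nonneg _,
    by simpa [ha] using abs_inner_le_mul_norm_sub_add_abs_inner a y z⟩

theorem sumSegment_subset_range {a : E} (ha : ‖a‖ = 1) (y : E) :
    sumSegment |⟪a, y⟫| ⊆ Set.range fun z ↦ (‖y - z‖, |⟪a, z⟫|) := by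
  rintro p ⟨hsum, hp₁, hp₂⟩
  obtain ⟨h₁, h₂⟩ :=
    abs_mul_sign_eq_and_abs_sub_mul_sign_eq hp₁ (hsum ▸ le_add_of_nonneg_right hp₂)
  refine ⟨y - (p.1 * SignType.sign ⟪a, y⟫) • a, Prod.ext ?_ ?_⟩
  · simpa [norm_smul, ha] using h₁
  · simp only [inner_sub_right, real_inner_smul_right, real_inner_self_eq_norm_sq, ha]
    simp only [one_pow, mul_one, h₂]
    linarith

end InnerProductSpace

theorem misfit_latency_pareto_front_characterization_general
    {n : ℕ} (y a : EuclideanSpace ℝ (Fin n)) (ha : ‖a‖ = 1)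
    (r : ℝ) (hr : r = ⟪a, y⟫) :
    {s : ℝ × ℝ | ∃ yh : EuclideanSpace ℝ (Fin n),
        (¬ ∃ z : EuclideanSpace ℝ (Fin n),
          (‖y - z‖^2 ≤ ‖y - yh‖^2 ∧ ⟪a, z⟫^2 ≤ ⟪a, yh⟫^2) ∧
          (‖y - z‖^2 < ‖y - yh‖^2 ∨ ⟪a, z⟫^2 < ⟪a, yh⟫^2)) ∧
        s = (‖y - yh‖^2, ⟪a, yh⟫^2)} =
      {s : ℝ × ℝ | Real.sqrt s.1 + Real.sqrt s.2 = |r| ∧ 0 ≤ s.1 ∧ 0 ≤ s.2} := by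
  subst hr
  have hrange : (Set.range fun z ↦ (‖y - z‖ ^ 2, ⟪a, z⟫ ^ 2)) =
      Prod.map (· ^ 2) (· ^ 2) '' Set.range fun z ↦ (‖y - z‖, |⟪a, z⟫|) := by
    rw [← Set.range_comp]
    simp only [Function.comp_def, Prod.map, sq_abs]
  refine (setOf_minimal_mem_range_prod fun z ↦ (‖y - z‖ ^ 2, ⟪a, z⟫ ^ 2)).symm.trans ?_
  rw [hrange, ← image_monotone_setOfPred_minimal_mem,
    setOf_minimal_eq_sumSegment (abs_nonneg _) (sumSegment_subset_range ha y)
      (nonneg_and_abs_inner_le_add_of_mem_range ha y), image_sq_sumSegment]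
  rintro _ _ ⟨z, rfl⟩ ⟨w, rfl⟩
  exact Prod.map_sq_le_map_sq_iff ⟨norm_nonneg _, abs_nonneg _⟩ ⟨norm_nonneg _, abs_nonneg _⟩

theorem misfit_latency_pareto_front_characterization
    {n : ℕ} (y a : EuclideanSpace ℝ (Fin n)) (ha : ‖a‖ = 1)
    (r : ℝ) (hr : r = ⟪a, y⟫) (hr0 : r ≠ 0) :
    {s : ℝ × ℝ | ∃ yh : EuclideanSpace ℝ (Fin n),
        (¬ ∃ z : EuclideanSpace ℝ (Fin n),
          (‖y - z‖^2 ≤ ‖y - yh‖^2 ∧ ⟪a, z⟫^2 ≤ ⟪a, yh⟫^2) ∧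
          (‖y - z‖^2 < ‖y - yh‖^2 ∨ ⟪a, z⟫^2 < ⟪a, yh⟫^2)) ∧
        s = (‖y - yh‖^2, ⟪a, yh⟫^2)} =
      {s : ℝ × ℝ | Real.sqrt s.1 + Real.sqrt s.2 = |r| ∧ 0 ≤ s.1 ∧ 0 ≤ s.2} :=
  misfit_latency_pareto_front_characterization_general y a ha r hr
end
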